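/- The gradient of $\omega^*(Y) = \log(\operatorname{tr}(\exp(Y + I_n)))$ on the space of symmetric matrices is $\nabla \omega^*(Y) = \exp(Y + I_n)/\operatorname{tr}(\exp(Y + I_n))$. -/

import Mathlib

open Matrix

/-- Matrix exponential. -/
noncomputable def expm {n : ℕ} (A : Matrix (Fin n) (Fin n) ℝ) : Matrix (Fin n) (Fin n) ℝ :=
  NormedSpace.exp A

/-- Matrix logarithm of a symmetric matrix, defined via the spectral decomposition
(with the convention `log 0 = 0` on the kernel, since `Real.log 0 = 0`). -/
noncomputable def mlog {n : ℕ} (A : Matrix (Fin n) (Fin n) ℝ) : Matrix (Fin n) (Fin n) ℝ :=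
  if h : A.IsHermitian then
    (h.eigenvectorUnitary : Matrix (Fin n) (Fin n) ℝ) *
      Matrix.diagonal (fun i => Real.log (h.eigenvalues i)) *
      star (h.eigenvectorUnitary : Matrix (Fin n) (Fin n) ℝ)
  else 0

/-- `tr(X log X)` for a symmetric matrix `X`, via eigenvalues (with `0 log 0 = 0`). -/
noncomputable def trXlogX {n : ℕ} (A : Matrix (Fin n) (Fin n) ℝ) : ℝ :=
  if h : A.IsHermitian then ∑ i, h.eigenvalues i * Real.log (h.eigenvalues i) else 0

/-- The quantum entropy `ω(X) = tr(X log X - X)` of a symmetric matrix, via eigenvalues. -/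
noncomputable def qent {n : ℕ} (A : Matrix (Fin n) (Fin n) ℝ) : ℝ :=
  trXlogX A - A.trace

/-- The conjugate of the quantum entropy, `ω*(Y) = log tr exp(Y + Iₙ)`. -/
noncomputable def qentStar {n : ℕ} (Y : Matrix (Fin n) (Fin n) ℝ) : ℝ :=
  Real.log (expm (Y + 1)).trace

/-- Trace norm (sum of singular values) of a symmetric matrix, via eigenvalues. -/
noncomputable def trNorm {n : ℕ} (A : Matrix (Fin n) (Fin n) ℝ) : ℝ :=
  if h : A.IsHermitian then ∑ i, |h.eigenvalues i| else 0

/-- Spectral norm (largest singular value) of a symmetric matrix, via eigenvalues. -/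
noncomputable def specNorm {n : ℕ} (A : Matrix (Fin n) (Fin n) ℝ) : ℝ :=
  if h : A.IsHermitian then ⨆ i, |h.eigenvalues i| else 0

/-- The Gibbs state `exp(Y + Iₙ) / tr(exp(Y + Iₙ))`. -/
noncomputable def gibbs {n : ℕ} (Y : Matrix (Fin n) (Fin n) ℝ) : Matrix (Fin n) (Fin n) ℝ :=
  ((expm (Y + 1)).trace)⁻¹ • expm (Y + 1)

/-- The Fenchel coupling `H(Q, Y) = ω(Q) + ω*(Y) - tr(QY)`. -/
noncomputable def fenchelH {n : ℕ} (Q Y : Matrix (Fin n) (Fin n) ℝ) : ℝ :=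
  qent Q + qentStar Y - (Q * Y).trace

attribute [local instance] Matrix.frobeniusNormedAddCommGroup Matrix.frobeniusNormedSpace

/-! For a continuous functional `τ` with `τ (x * y) = τ (y * x)`, expand `exp x = ∑ xᵏ / k!`.
By cyclicity every term `τ (xᵏ)` has derivative `h ↦ k • τ (xᵏ⁻¹ * h)`, and these derivatives
are bounded on the unit ball around `a` by the summable `‖τ‖ k Rᵏ⁻¹ / k!`, `R = ‖a‖ + 1`, so termwise
differentiation gives `h ↦ τ (exp a * h)`. For symmetric `Y` the trace of `exp (Y + 1)` is
`tr (Bᴴ B)` with `B = exp ((Y + 1) / 2)` invertible, hence positive, and the chain rule through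
`Real.log` produces the Gibbs state. -/

open NormedSpace ContinuousLinearMap
open scoped Nat

section TracialExp

variable {𝕂 𝔸 F : Type*} [RCLike 𝕂] [NormedRing 𝔸] [NormedAlgebra 𝕂 𝔸]
  [NormedAddCommGroup F] [NormedSpace 𝕂 F]

-- Unlike `‖x ^ j‖ ≤ ‖x‖ ^ j`, this holds also for `j = 0`, where `‖1‖` may exceed `1`
-- (as for the Frobenius norm).
theorem norm_pow_mul_le (x y : 𝔸) (j : ℕ) : ‖x ^ j * y‖ ≤ ‖x‖ ^ j * ‖y‖ := by
  induction j with
  | zero => simp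
  | succ j ih =>
    rw [pow_succ', mul_assoc, pow_succ', mul_assoc]
    exact (norm_mul_le _ _).trans (mul_le_mul_of_nonneg_left ih (norm_nonneg _))

theorem norm_comp_mul_pow_le (τ : 𝔸 →L[𝕂] F) (x : 𝔸) (j : ℕ) :
    ‖τ.comp (mul 𝕂 𝔸 (x ^ j))‖ ≤ ‖τ‖ * ‖x‖ ^ j :=
  opNorm_le_bound _ (by positivity) fun h =>
    calc ‖τ (x ^ j * h)‖ ≤ ‖τ‖ * ‖x ^ j * h‖ := τ.le_opNorm _
      _ ≤ ‖τ‖ * ‖x‖ ^ j * ‖h‖ := by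
        rw [mul_assoc]
        exact mul_le_mul_of_nonneg_left (norm_pow_mul_le x h j) (norm_nonneg _)

theorem hasSum_inv_factorial_mul_smul_pow_pred [CompleteSpace 𝔸] (x : 𝔸) :
    HasSum (fun k : ℕ => ((k ! : 𝕂)⁻¹ * k) • x ^ (k - 1)) (exp x) := by
  refine (hasSum_nat_add_iff' 1).mp ?_
  rw [Finset.sum_range_one, Nat.cast_zero, mul_zero, zero_smul, sub_zero]
  have shift (k : ℕ) :
      (((k + 1)! : 𝕂)⁻¹ * (k + 1 : ℕ)) • x ^ (k + 1 - 1) = (k ! : 𝕂)⁻¹ • x ^ k := by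
    rw [Nat.add_sub_cancel, Nat.factorial_succ, Nat.cast_mul, _root_.mul_inv_rev, mul_assoc,
      inv_mul_cancel₀ (Nat.cast_ne_zero.mpr k.succ_ne_zero), mul_one]
  simpa only [shift] using exp_series_hasSum_exp' (𝕂 := 𝕂) x

theorem hasFDerivAt_trace_pow (τ : 𝔸 →L[𝕂] F) (hτ : ∀ x y, τ (x * y) = τ (y * x))
    (k : ℕ) (a : 𝔸) :
    HasFDerivAt (fun x => τ (x ^ k)) ((k : 𝕂) • τ.comp (mul 𝕂 𝔸 (a ^ (k - 1)))) a := by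
  refine (τ.hasFDerivAt.comp a (hasFDerivAt_pow' k)).congr_fderiv (ext fun h => ?_)
  have cyclic : ∀ i ∈ Finset.range k, τ (a ^ (k - 1 - i) * h * a ^ i) = τ (a ^ (k - 1) * h) := by
    intro i hi
    rw [hτ, ← mul_assoc, ← pow_add]
    congr 3
    have := Finset.mem_range.mp hi
    omega
  simp [map_sum, Finset.sum_congr rfl cyclic, Nat.cast_smul_eq_nsmul]

theorem hasFDerivAt_trace_exp [CompleteSpace 𝔸] [CompleteSpace F] (τ : 𝔸 →L[𝕂] F)
    (hτ : ∀ x y, τ (x * y) = τ (y * x)) (a : 𝔸) :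
    HasFDerivAt (fun x => τ (exp x)) (τ.comp (mul 𝕂 𝔸 (exp a))) a := by
  let _ : NormedSpace ℝ 𝔸 := .restrictScalars ℝ 𝕂 𝔸
  let f : ℕ → 𝔸 → F := fun k x => (k ! : 𝕂)⁻¹ • τ (x ^ k)
  let f' : ℕ → 𝔸 → 𝔸 →L[𝕂] F := fun k x => ((k ! : 𝕂)⁻¹ * k) • τ.comp (mul 𝕂 𝔸 (x ^ (k - 1)))
  let R := ‖a‖ + 1
  have hasSum_f (x : 𝔸) : HasSum (f · x) (τ (exp x)) := by
    simpa [f] using τ.hasSum (exp_series_hasSum_exp' (𝕂 := 𝕂) x)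
  have hasSum_f' : HasSum (f' · a) (τ.comp (mul 𝕂 𝔸 (exp a))) := by
    simpa [f'] using ((compL 𝕂 𝔸 𝔸 F τ).comp (mul 𝕂 𝔸)).hasSum
      (hasSum_inv_factorial_mul_smul_pow_pred (𝕂 := 𝕂) a)
  have hf (k : ℕ) (x : 𝔸) (_ : x ∈ Metric.ball a 1) : HasFDerivAt (f k) (f' k x) x := by
    simpa [f, f', smul_smul] using (hasFDerivAt_trace_pow τ hτ k x).fun_const_smul (k ! : 𝕂)⁻¹
  have hf' (k : ℕ) (x : 𝔸) (hx : x ∈ Metric.ball a 1) :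
      ‖f' k x‖ ≤ ‖τ‖ * (((k ! : ℝ)⁻¹ * k) • R ^ (k - 1)) :=
    calc ‖f' k x‖ ≤ ((k ! : ℝ)⁻¹ * k) * (‖τ‖ * ‖x‖ ^ (k - 1)) := by
          refine (norm_smul_le ((k ! : 𝕂)⁻¹ * k) (τ.comp (mul 𝕂 𝔸 (x ^ (k - 1))))).trans ?_
          simp only [norm_mul, norm_inv, RCLike.norm_natCast]
          exact mul_le_mul_of_nonneg_left (norm_comp_mul_pow_le τ x _) (by positivity)
      _ ≤ ‖τ‖ * (((k ! : ℝ)⁻¹ * k) • R ^ (k - 1)) := by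
          rw [smul_eq_mul, mul_left_comm]
          gcongr
          exact (norm_lt_of_mem_ball hx).le
  have hu : Summable fun k : ℕ => ‖τ‖ * (((k ! : ℝ)⁻¹ * k) • R ^ (k - 1)) :=
    ((hasSum_inv_factorial_mul_smul_pow_pred (𝕂 := ℝ) R).mul_left ‖τ‖).summable
  have := hasFDerivAt_tsum_of_isPreconnected hu Metric.isOpen_ball
    (convex_ball a 1).isPreconnected hf hf' (Metric.mem_ball_self one_pos) (hasSum_f a).summable
    (Metric.mem_ball_self one_pos)
  simpa only [fun x => (hasSum_f x).tsum_eq, hasSum_f'.tsum_eq] using this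

end TracialExp

section MatrixExp

variable {m : Type*} [Fintype m] [DecidableEq m]

attribute [local instance] Matrix.frobeniusNormedRing Matrix.frobeniusNormedAlgebra

theorem Matrix.hasFDerivAt_trace_exp {𝕜 : Type*} [RCLike 𝕜] (A : Matrix m m 𝕜) :
    HasFDerivAt (fun X : Matrix m m 𝕜 => (exp X).trace)
      ((traceLinearMap m 𝕜 𝕜).toContinuousLinearMap.comp (mul 𝕜 _ (exp A))) A :=
  _root_.hasFDerivAt_trace_exp (traceLinearMap m 𝕜 𝕜).toContinuousLinearMap trace_mul_comm A

theorem Matrix.IsHermitian.trace_exp_pos [Nonempty m] {A : Matrix m m ℝ} (hA : A.IsHermitian) :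
    0 < (NormedSpace.exp A).trace := by
  set B := NormedSpace.exp ((2 : ℝ)⁻¹ • A)
  have hB : Bᴴ = B := (hA.smul (IsSelfAdjoint.all _)).exp
  have hexp : NormedSpace.exp A = Bᴴ * B := by
    rw [hB, ← Matrix.exp_add_of_commute _ _ (Commute.refl _), ← two_smul ℝ,
      smul_inv_smul₀ two_ne_zero]
  rw [hexp]
  refine (posSemidef_conjTranspose_mul_self B).trace_nonneg.lt_of_ne' ?_
  rw [Ne, trace_conjTranspose_mul_self_eq_zero_iff]
  exact (Matrix.isUnit_exp _).ne_zero

end MatrixExp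

/-- The gradient of `ω*(Y) = log tr exp(Y + Iₙ)` w.r.t. the Frobenius
(trace) inner product is the Gibbs state: the Fréchet derivative at `Y` is the linear
functional `H ↦ tr((exp(Y + Iₙ)/tr exp(Y + Iₙ)) · H)`. -/
theorem stmt9 {n : ℕ} (Y : Matrix (Fin n) (Fin n) ℝ) (hY : Y.IsHermitian) :
    HasFDerivAt (fun W : Matrix (Fin n) (Fin n) ℝ => qentStar W)
      (LinearMap.toContinuousLinearMap
        ((Matrix.traceLinearMap (Fin n) ℝ ℝ).comp
          (LinearMap.mulLeft ℝ (gibbs Y)))) Y := by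
  rcases isEmpty_or_nonempty (Fin n) with _ | _
  · exact (hasFDerivAt_of_subsingleton _ Y).congr_fderiv (Subsingleton.elim _ _)
  have hpos := (hY.add Matrix.isHermitian_one).trace_exp_pos
  have hexp := (Matrix.hasFDerivAt_trace_exp (Y + 1)).comp Y ((hasFDerivAt_id Y).add_const 1)
  refine ((Real.hasDerivAt_log hpos.ne').comp_hasFDerivAt Y hexp).congr_fderiv
    (ContinuousLinearMap.ext fun H => ?_)
  -- The two sides carry the Frobenius and the product topology, equal only up to unfolding.
  change (exp (Y + 1)).trace⁻¹ * (exp (Y + 1) * H).trace = (gibbs Y * H).trace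
  rw [gibbs, expm, Matrix.smul_mul, trace_smul, smul_eq_mul]
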